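/- arXiv:1503.06997 — 4 statements merged into one kernel-verified Lean document; each statement's English description precedes it below -/
import Mathlib

section
/- Let A be an m×n complex matrix of rank r with r < min{m,n}, let M be an m×m Hermitian positive definite matrix and N an n×n Hermitian positive definite matrix, and set A♯ = N⁻¹A*M. Then the entries ã⁺_{ij} of the weighted Moore–Penrose inverse A⁺_{M,N} satisfy, for all i ∈ {1,…,n} and j ∈ {1,…,m}: ã⁺_{ij} = ( Σ_{β ∈ J_{r,n}{i}} |(((A♯A)_{.i}(a♯_{.j}))_β^β| ) / ( Σ_{β ∈ J_{r,n}} |((A♯A))_β^β| ), where a♯_{.j} denotes the j-th column of A♯. -/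
open Matrix ComplexOrder

/-- The principal minor of a square matrix `M` determined by the subset `β` of indices. -/
noncomputable def Matrix.pminor {n : Type*} [DecidableEq n] [Fintype n]
    (M : Matrix n n ℂ) (β : Finset n) : ℂ :=
  (M.submatrix (fun i : {x // x ∈ β} => i.1) (fun i : {x // x ∈ β} => i.1)).det

/-!
Write `B = A♯A` and let `c` and `E` be the coefficients of `λ^(n-r)` in `det (λI + B)` and
`adj (λI + B)`. Expanding `det (λI + B)` by multilinearity in the rows shows that `c` is the
denominator of the formula; the same expansion and Cramer's rule show that the numerator is the
`(i, j)` entry of `E A♯`.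
Since `N^(-1/2) A*MA N^(-1/2)` is Hermitian, `B` is similar to a diagonal matrix with exactly `r`
nonzero entries; in that basis `adj (λI + B)` is diagonal, and one reads off that `c` is the
product of the nonzero eigenvalues of `B` and that `E B² = c B`. The Penrose equations give
`B X = A♯` and `X = B W` for some `W`, hence `E A♯ = E B² W = c B W = c X`.
-/

namespace Polynomial

theorem coeff_prod_X_add_C_card_filter_eq_zero {ι R : Type*} [CommRing R] [DecidableEq R]
    (T : Finset ι) (μ : ι → R) :
    (∏ l ∈ T, (X + C (μ l))).coeff (T.filter (μ · = 0)).card = ∏ l ∈ T.filter (μ · ≠ 0), μ l := by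
  rw [← Finset.prod_filter_mul_prod_filter_not T (μ · = 0),
    Finset.prod_congr rfl fun l hl => by rw [(Finset.mem_filter.mp hl).2, C_0, add_zero],
    Finset.prod_const, coeff_X_pow_mul', if_pos le_rfl, Nat.sub_self, coeff_zero_eq_eval_zero,
    eval_prod]
  simp

end Polynomial

namespace Matrix

open Polynomial

section CommRing

variable {ι R : Type*} [Fintype ι] [DecidableEq ι] [CommRing R]

theorem det_diagonal_add (d : ι → R) (P : Matrix ι ι R) :
    det (diagonal d + P) =
      ∑ β : Finset ι, (∏ a ∈ βᶜ, d a) * (P.submatrix (Subtype.val : β → ι) Subtype.val).det := by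
  let D := (detRowAlternating : (ι → R) [⋀^ι]→ₗ[R] R).toMultilinearMap
  have hrows : (fun a => (diagonal d + P) a) = (fun a => d a • Pi.single a 1) + P.row := by
    ext a b
    by_cases h : a = b <;> simp [h, eq_comm]
  change D (fun a => (diagonal d + P) a) = _
  rw [hrows, D.map_add_univ, ← Equiv.sum_comp (compl_involutive.toPerm _)]
  refine Finset.sum_congr rfl fun β _ => ?_
  have hsplit : βᶜ.piecewise (fun a => d a • (Pi.single a 1 : ι → R)) P.row =
      βᶜ.piecewise (fun a => d a • β.piecewise P.row (1 : Matrix ι ι R).row a)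
        (β.piecewise P.row (1 : Matrix ι ι R).row) := by
    ext a : 1
    by_cases h : a ∈ β <;> simp [Finset.piecewise, h, Matrix.row]
    ext b
    simp [one_apply, Pi.single_apply, eq_comm]
  change D (βᶜ.piecewise _ _) = _
  rw [hsplit, D.map_piecewise_smul, smul_eq_mul]
  exact congrArg _ (det_piecewise_one_eq_submatrix_det P β)

theorem coeff_det_diagonal_add_map_C (Z : Finset ι) (P : Matrix ι ι R) {r : ℕ}
    (hr : r ≤ Fintype.card ι) :
    (det (diagonal (fun a => if a ∈ Z then 0 else X) + P.map C)).coeff (Fintype.card ι - r) =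
      ∑ β ∈ (Finset.univ.powersetCard r).filter (Z ⊆ ·),
        (P.submatrix (Subtype.val : β → ι) Subtype.val).det := by
  have hterm (β : Finset ι) :
      ((∏ a ∈ βᶜ, if a ∈ Z then (0 : R[X]) else X) *
        ((P.map C).submatrix (Subtype.val : β → ι) Subtype.val).det).coeff (Fintype.card ι - r) =
      if β.card = r ∧ Z ⊆ β then (P.submatrix (Subtype.val : β → ι) Subtype.val).det else 0 := by
    by_cases hZ : Z ⊆ β
    · have hprod : (∏ a ∈ βᶜ, if a ∈ Z then (0 : R[X]) else X) =
          X ^ (Fintype.card ι - β.card) := by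
        rw [Finset.prod_ite_of_false (fun a ha h => Finset.mem_compl.mp ha (hZ h)),
          Finset.prod_const, Finset.card_compl]
      have hdet : ((P.map C).submatrix (Subtype.val : β → ι) Subtype.val).det =
          C (P.submatrix (Subtype.val : β → ι) Subtype.val).det :=
        (RingHom.map_det C _).symm
      have hcard := Finset.card_le_univ β
      rw [hprod, hdet, mul_comm, coeff_C_mul_X_pow]
      by_cases hβ : β.card = r
      · simp [hβ, hZ]
      · simp only [hβ, false_and, if_false, ite_eq_right_iff]
        omega
    · obtain ⟨a, haZ, haβ⟩ := Finset.not_subset.mp hZ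
      rw [Finset.prod_eq_zero (Finset.mem_compl.mpr haβ) (by simp [haZ])]
      simp [hZ]
  rw [det_diagonal_add, finsetSum_coeff, Finset.sum_congr rfl fun β _ => hterm β,
    ← Finset.sum_filter]
  congr 1
  ext β
  simp [Finset.mem_powersetCard]

theorem charmatrix_neg (B : Matrix ι ι R) : charmatrix (-B) = diagonal (fun _ => X) + B.map C := by
  ext i j
  by_cases h : i = j <;> simp [h]

theorem coeff_charpoly_neg (B : Matrix ι ι R) {r : ℕ} (hr : r ≤ Fintype.card ι) :
    (-B).charpoly.coeff (Fintype.card ι - r) =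
      ∑ β ∈ Finset.univ.powersetCard r, (B.submatrix (Subtype.val : β → ι) Subtype.val).det := by
  have h := coeff_det_diagonal_add_map_C ∅ B hr
  simp only [Finset.notMem_empty, if_false, Finset.empty_subset, Finset.filter_true] at h
  rw [charpoly, charmatrix_neg, h]

theorem coeff_det_updateCol_charmatrix_neg (B : Matrix ι ι R) (i : ι) (c : ι → R) {r : ℕ}
    (hr : r ≤ Fintype.card ι) :
    ((charmatrix (-B)).updateCol i (fun k => C (c k))).det.coeff (Fintype.card ι - r) =
      ∑ β ∈ (Finset.univ.powersetCard r).filter (i ∈ ·),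
        ((B.updateCol i c).submatrix (Subtype.val : β → ι) Subtype.val).det := by
  have h := coeff_det_diagonal_add_map_C {i} (B.updateCol i c) hr
  simp only [Finset.mem_singleton, Finset.singleton_subset_iff] at h
  rw [← h]
  congr 3
  ext a b
  by_cases hb : b = i <;> by_cases ha : a = b <;> simp_all

theorem coeff_det_updateCol_map_C (Y : Matrix ι ι R[X]) (i : ι) (c : ι → R) (d : ℕ) :
    (Y.updateCol i (fun k => C (c k))).det.coeff d =
      ((matPolyEquiv Y.adjugate).coeff d *ᵥ c) i := by
  rw [← cramer_apply, cramer_eq_adjugate_mulVec, mulVec, dotProduct, finsetSum_coeff]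
  simp [mulVec, dotProduct, matPolyEquiv_coeff_apply]

theorem sum_det_updateCol_submatrix_eq_coeff_adjugate_mul_apply {κ : Type*} (B : Matrix ι ι R)
    (S : Matrix ι κ R) (i : ι) (j : κ) {r : ℕ} (hr : r ≤ Fintype.card ι) :
    ∑ β ∈ (Finset.univ.powersetCard r).filter (i ∈ ·),
        ((B.updateCol i (fun k => S k j)).submatrix (Subtype.val : β → ι) Subtype.val).det =
      ((matPolyEquiv (adjugate (charmatrix (-B)))).coeff (Fintype.card ι - r) * S) i j := by
  rw [← coeff_det_updateCol_charmatrix_neg B i _ hr, coeff_det_updateCol_map_C]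
  rfl

section Conj

variable {P Q : Matrix ι ι R}

theorem adjugate_mul_mul_of_mul_eq_one (hPQ : P * Q = 1) (A : Matrix ι ι R) :
    adjugate (P * A * Q) = P * adjugate A * Q := by
  have hQP : Q * P = 1 := mul_eq_one_comm.mp hPQ
  have hadjQ : adjugate Q = Q.det • P := by
    rw [← Matrix.one_mul (adjugate Q), ← hPQ, Matrix.mul_assoc, mul_adjugate, mul_smul_comm,
      mul_one]
  have hadjP : adjugate P = P.det • Q := by
    rw [← Matrix.one_mul (adjugate P), ← hQP, Matrix.mul_assoc, mul_adjugate, mul_smul_comm,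
      mul_one]
  have hdet : P.det * Q.det = 1 := by rw [← det_mul, hPQ, det_one]
  rw [adjugate_mul_distrib, adjugate_mul_distrib, hadjQ, hadjP]
  simp only [Matrix.smul_mul, Matrix.mul_smul, smul_smul, hdet, one_smul, Matrix.mul_assoc]

theorem charmatrix_mul_mul_of_mul_eq_one (hPQ : P * Q = 1) (A : Matrix ι ι R) :
    charmatrix (P * A * Q) = C.mapMatrix P * charmatrix A * C.mapMatrix Q := by
  have hunit : C.mapMatrix P * C.mapMatrix Q = 1 := by rw [← map_mul, hPQ, map_one]
  simp only [charmatrix, Matrix.mul_sub, Matrix.sub_mul, map_mul]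
  congr 1
  rw [← (scalar_commute (X : R[X]) (fun _ => Commute.all _ _) _).eq, Matrix.mul_assoc, hunit,
    Matrix.mul_one]

theorem charpoly_mul_mul_of_mul_eq_one (hPQ : P * Q = 1) (A : Matrix ι ι R) :
    (P * A * Q).charpoly = A.charpoly := by
  have hdet : (C.mapMatrix Q).det * (C.mapMatrix P).det = 1 := by
    rw [← det_mul, ← map_mul, mul_eq_one_comm.mp hPQ, map_one, det_one]
  rw [charpoly, charmatrix_mul_mul_of_mul_eq_one hPQ, det_mul, det_mul, mul_comm, ← mul_assoc,
    hdet, one_mul, charpoly]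

theorem coeff_matPolyEquiv_adjugate_charmatrix_mul_mul (hPQ : P * Q = 1) (A : Matrix ι ι R)
    (d : ℕ) :
    (matPolyEquiv (adjugate (charmatrix (P * A * Q)))).coeff d =
      P * (matPolyEquiv (adjugate (charmatrix A))).coeff d * Q := by
  have hCPQ : C.mapMatrix P * C.mapMatrix Q = 1 := by rw [← map_mul, hPQ, map_one]
  rw [charmatrix_mul_mul_of_mul_eq_one hPQ, adjugate_mul_mul_of_mul_eq_one hCPQ, map_mul, map_mul]
  simp [coeff_C_mul, coeff_mul_C]

end Conj

section Diagonal

theorem coeff_matPolyEquiv_diagonal (p : ι → R[X]) (d : ℕ) :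
    (matPolyEquiv (diagonal p)).coeff d = diagonal fun k => (p k).coeff d := by
  ext a b
  by_cases h : a = b <;> simp [matPolyEquiv_coeff_apply, h]

theorem charmatrix_neg_diagonal (μ : ι → R) :
    charmatrix (-diagonal μ) = diagonal fun k => X + C (μ k) := by
  rw [diagonal_neg, charmatrix_diagonal]
  simp [sub_eq_add_neg]

variable [DecidableEq R]

theorem coeff_adjugate_charmatrix_neg_diagonal_mul_sq (μ : ι → R) :
    (matPolyEquiv (adjugate (charmatrix (-diagonal μ)))).coeff (Finset.univ.filter (μ · = 0)).card *
        diagonal μ ^ 2 =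
      (-diagonal μ).charpoly.coeff (Finset.univ.filter (μ · = 0)).card • diagonal μ := by
  rw [charpoly, charmatrix_neg_diagonal, adjugate_diagonal, coeff_matPolyEquiv_diagonal,
    det_diagonal, Polynomial.coeff_prod_X_add_C_card_filter_eq_zero, diagonal_pow,
    diagonal_mul_diagonal, ← diagonal_smul]
  congr 1
  ext k
  by_cases hk : μ k = 0
  · simp [hk]
  -- `∏ l ≠ k, (X + C (μ l))` keeps every factor `X`, so its coefficient is `c / μ k`.
  have hzeros : (Finset.univ.erase k).filter (μ · = 0) = Finset.univ.filter (μ · = 0) := by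
    rw [Finset.filter_erase, Finset.erase_eq_of_notMem (by simp [hk])]
  have hnz : k ∈ Finset.univ.filter (μ · ≠ 0) := by simp [hk]
  simp only [Pi.smul_apply, Pi.pow_apply, smul_eq_mul]
  rw [← hzeros, Polynomial.coeff_prod_X_add_C_card_filter_eq_zero, Finset.filter_erase,
    ← Finset.mul_prod_erase _ _ hnz]
  ring

variable {P Q B : Matrix ι ι R} {μ : ι → R}

theorem coeff_charpoly_neg_eq_prod_of_eq_mul_diagonal_mul (hPQ : P * Q = 1)
    (hB : B = P * diagonal μ * Q) :
    (-B).charpoly.coeff (Finset.univ.filter (μ · = 0)).card =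
      ∏ l ∈ Finset.univ.filter (μ · ≠ 0), μ l := by
  rw [hB, ← neg_mul, ← Matrix.mul_neg, charpoly_mul_mul_of_mul_eq_one hPQ, charpoly,
    charmatrix_neg_diagonal, det_diagonal, Polynomial.coeff_prod_X_add_C_card_filter_eq_zero]

theorem coeff_adjugate_charmatrix_neg_mul_sq_of_eq_mul_diagonal_mul (hPQ : P * Q = 1)
    (hB : B = P * diagonal μ * Q) :
    (matPolyEquiv (adjugate (charmatrix (-B)))).coeff (Finset.univ.filter (μ · = 0)).card *
        B ^ 2 =
      (-B).charpoly.coeff (Finset.univ.filter (μ · = 0)).card • B := by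
  have hQP : Q * P = 1 := mul_eq_one_comm.mp hPQ
  have hB2 : B ^ 2 = P * diagonal μ ^ 2 * Q := by
    rw [hB, sq, sq]
    simp only [Matrix.mul_assoc]
    rw [← Matrix.mul_assoc Q, hQP, Matrix.one_mul]
  have hnegB : -B = P * (-diagonal μ) * Q := by rw [hB, Matrix.mul_neg, neg_mul]
  have hdiag := coeff_adjugate_charmatrix_neg_diagonal_mul_sq μ
  set E₀ := (matPolyEquiv (adjugate (charmatrix (-diagonal μ)))).coeff
    (Finset.univ.filter (μ · = 0)).card
  rw [hnegB, coeff_matPolyEquiv_adjugate_charmatrix_mul_mul hPQ,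
    charpoly_mul_mul_of_mul_eq_one hPQ, hB2, hB]
  calc P * E₀ * Q * (P * diagonal μ ^ 2 * Q) = P * (E₀ * diagonal μ ^ 2) * Q := by
        simp only [Matrix.mul_assoc]
        rw [← Matrix.mul_assoc Q, hQP, Matrix.one_mul]
    _ = _ := by rw [hdiag, Matrix.mul_smul, Matrix.smul_mul]

end Diagonal

end CommRing

theorem card_filter_eq_zero_of_eq_mul_diagonal_mul {ι K : Type*} [Fintype ι] [DecidableEq ι]
    [Field K] [DecidableEq K] {B P Q : Matrix ι ι K} {μ : ι → K} (hPQ : P * Q = 1)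
    (hB : B = P * diagonal μ * Q) :
    (Finset.univ.filter (μ · = 0)).card = Fintype.card ι - B.rank := by
  rw [hB, rank_mul_eq_left_of_isUnit_det _ _ (isUnit_det_of_left_inverse hPQ),
    rank_mul_eq_right_of_isUnit_det _ _ (isUnit_det_of_right_inverse hPQ), rank_diagonal,
    Fintype.card_subtype]
  have hsplit := Finset.card_filter_add_card_filter_not (s := (Finset.univ : Finset ι)) (μ · = 0)
  rw [Finset.card_univ] at hsplit
  simp only [ne_eq]
  omega

open scoped MatrixOrder in
theorem PosDef.exists_inv_mul_eq_mul_diagonal_mul {n 𝕜 : Type*} [Fintype n] [DecidableEq n]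
    [RCLike 𝕜] {N K : Matrix n n 𝕜} (hN : N.PosDef) (hK : K.IsHermitian) :
    ∃ (P Q : Matrix n n 𝕜) (μ : n → 𝕜), P * Q = 1 ∧ N⁻¹ * K = P * diagonal μ * Q := by
  set T := CFC.sqrt N
  have hTT : T * T = N := CFC.sqrt_mul_sqrt_self N hN.posSemidef.nonneg
  have hTH : Tᴴ = T := (CFC.sqrt_nonneg N).posSemidef.1
  have hTdet : IsUnit T.det :=
    isUnit_of_mul_isUnit_left (x := T.det)
      (by rw [← det_mul, hTT]; exact hN.isUnit.map detMonoidHom)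
  have hH : (T⁻¹ * K * T⁻¹).IsHermitian := by
    simpa [conjTranspose_nonsing_inv, hTH] using isHermitian_conjTranspose_mul_mul T⁻¹ hK
  obtain ⟨U, hU, μ, hspec⟩ :
      ∃ U ∈ unitaryGroup n 𝕜, ∃ μ : n → 𝕜, T⁻¹ * K * T⁻¹ = U * diagonal μ * star U :=
    ⟨_, hH.eigenvectorUnitary.2, _, hH.spectral_theorem⟩
  refine ⟨T⁻¹ * U, star U * T, μ, ?_, ?_⟩
  · rw [Matrix.mul_assoc, ← Matrix.mul_assoc U, Unitary.mul_star_self_of_mem hU, Matrix.one_mul,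
      nonsing_inv_mul _ hTdet]
  · calc N⁻¹ * K = T⁻¹ * (T⁻¹ * K * T⁻¹) * T := by
          rw [← hTT, Matrix.mul_inv_rev]
          simp only [Matrix.mul_assoc, nonsing_inv_mul _ hTdet, Matrix.mul_one]
      _ = T⁻¹ * U * diagonal μ * (star U * T) := by rw [hspec]; simp only [Matrix.mul_assoc]

section Penrose

variable {m n R : Type*} [Fintype m] [Fintype n] [CommRing R] [StarRing R]
  {A : Matrix m n R} {X : Matrix n m R} {M : Matrix m m R} {N : Matrix n n R}

theorem mul_conjTranspose_mul_mul_mul_eq_of_penrose {k : Type*} (L : Matrix k n R)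
    (hM : M.IsHermitian) (h1 : A * X * A = A) (h3 : (M * A * X)ᴴ = M * A * X) :
    L * Aᴴ * M * A * X = L * Aᴴ * M :=
  calc L * Aᴴ * M * A * X = L * (Aᴴ * (M * A * X)ᴴ) := by rw [h3]; simp only [Matrix.mul_assoc]
    _ = L * ((A * X * A)ᴴ * M) := by simp only [conjTranspose_mul, hM.eq, Matrix.mul_assoc]
    _ = L * Aᴴ * M := by rw [h1, Matrix.mul_assoc]

theorem exists_eq_inv_mul_conjTranspose_mul_mul_mul_of_penrose [DecidableEq m] [DecidableEq n]
    (hM : M.IsHermitian) (hMdet : IsUnit M.det) (hN : N.IsHermitian) (hNdet : IsUnit N.det)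
    (h1 : A * X * A = A) (h2 : X * A * X = X) (h3 : (M * A * X)ᴴ = M * A * X)
    (h4 : (N * X * A)ᴴ = N * X * A) :
    ∃ W : Matrix n m R, X = N⁻¹ * Aᴴ * M * A * W := by
  have hXA : X * A = N⁻¹ * Aᴴ * Xᴴ * N :=
    calc X * A = N⁻¹ * (N * X * A) := by
          rw [Matrix.mul_assoc N, nonsing_inv_mul_cancel_left _ _ hNdet]
      _ = N⁻¹ * (N * X * A)ᴴ := by rw [h4]
      _ = N⁻¹ * Aᴴ * Xᴴ * N := by simp only [conjTranspose_mul, hN.eq, Matrix.mul_assoc]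
  have hA : Aᴴ = Aᴴ * M * A * X * M⁻¹ := by
    have h := mul_conjTranspose_mul_mul_mul_eq_of_penrose (1 : Matrix n n R) hM h1 h3
    rw [Matrix.one_mul] at h
    rw [h, mul_nonsing_inv_cancel_right _ _ hMdet]
  refine ⟨X * M⁻¹ * Xᴴ * N * X, ?_⟩
  calc X = X * A * X := h2.symm
    _ = N⁻¹ * Aᴴ * Xᴴ * N * X := by rw [hXA]
    _ = N⁻¹ * (Aᴴ * M * A * X * M⁻¹) * Xᴴ * N * X := by rw [← hA]
    _ = N⁻¹ * Aᴴ * M * A * (X * M⁻¹ * Xᴴ * N * X) := by simp only [Matrix.mul_assoc]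

end Penrose

theorem rank_mul_eq_of_mul_mul_eq {m n K : Type*} [Fintype m] [Fintype n] [Field K]
    {S : Matrix n m K} {A : Matrix m n K} {X : Matrix n m K} (h : S * A * X = S) :
    (S * A).rank = S.rank :=
  le_antisymm (rank_mul_le_left S A) (by simpa only [h] using rank_mul_le_left (S * A) X)

theorem rank_inv_mul_conjTranspose_mul_mul_of_penrose {m n K : Type*} [Fintype m] [Fintype n]
    [DecidableEq m] [DecidableEq n] [Field K] [PartialOrder K] [StarRing K] [StarOrderedRing K]
    {A : Matrix m n K} {X : Matrix n m K} {M : Matrix m m K} {N : Matrix n n K}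
    (hM : M.IsHermitian) (hMdet : IsUnit M.det) (hNdet : IsUnit N.det) (h1 : A * X * A = A)
    (h3 : (M * A * X)ᴴ = M * A * X) :
    (N⁻¹ * Aᴴ * M * A).rank = A.rank := by
  rw [rank_mul_eq_of_mul_mul_eq (mul_conjTranspose_mul_mul_mul_eq_of_penrose N⁻¹ hM h1 h3),
    rank_mul_eq_left_of_isUnit_det _ _ hMdet,
    rank_mul_eq_right_of_isUnit_det _ _ (isUnit_nonsing_inv_det N hNdet), rank_conjTranspose]

end Matrix

/-- Determinantal representation of the weighted Moore–Penrose inverse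
`X = A⁺_{M,N}` (characterized by the equations `AXA = A`, `XAX = X`, `(MAX)ᴴ = MAX`,
`(NXA)ᴴ = NXA`) of an `m × n` complex matrix `A` of rank `r < min m n`, where
`M`, `N` are Hermitian positive definite and `A♯ = N⁻¹AᴴM`. -/
theorem weightedMoorePenrose_entry_det_repr
    (m n r : ℕ) (A : Matrix (Fin m) (Fin n) ℂ) (hA : A.rank = r)
    (hr : r < min m n)
    (M : Matrix (Fin m) (Fin m) ℂ) (N : Matrix (Fin n) (Fin n) ℂ)
    (hM : M.PosDef) (hN : N.PosDef)
    (X : Matrix (Fin n) (Fin m) ℂ)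
    (h1 : A * X * A = A) (h2 : X * A * X = X)
    (h3 : (M * A * X)ᴴ = M * A * X) (h4 : (N * X * A)ᴴ = N * X * A)
    (i : Fin n) (j : Fin m) :
    X i j =
      (∑ β ∈ (Finset.powersetCard r (Finset.univ : Finset (Fin n))).filter
          (fun β => i ∈ β),
        (((N⁻¹ * Aᴴ * M) * A).updateCol i (fun k => (N⁻¹ * Aᴴ * M) k j)).pminor β) /
      (∑ β ∈ Finset.powersetCard r (Finset.univ : Finset (Fin n)),
        ((N⁻¹ * Aᴴ * M) * A).pminor β) := by
  have hrn : r ≤ Fintype.card (Fin n) := by simpa using hr.le.trans (min_le_right m n)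
  have hMdet : IsUnit M.det := (isUnit_iff_isUnit_det M).mp hM.isUnit
  have hNdet : IsUnit N.det := (isUnit_iff_isUnit_det N).mp hN.isUnit
  set S := N⁻¹ * Aᴴ * M with hS
  have hSAX : S * A * X = S := mul_conjTranspose_mul_mul_mul_eq_of_penrose N⁻¹ hM.1 h1 h3
  obtain ⟨W, hXW⟩ : ∃ W, X = S * A * W :=
    exists_eq_inv_mul_conjTranspose_mul_mul_mul_of_penrose hM.1 hMdet hN.1 hNdet h1 h2 h3 h4
  have hrank : (S * A).rank = r :=
    hA ▸ rank_inv_mul_conjTranspose_mul_mul_of_penrose hM.1 hMdet hNdet h1 h3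
  obtain ⟨P, Q, μ, hPQ, hB⟩ : ∃ (P Q : Matrix (Fin n) (Fin n) ℂ) (μ : Fin n → ℂ),
      P * Q = 1 ∧ S * A = P * diagonal μ * Q := by
    simpa only [hS, Matrix.mul_assoc] using
      hN.exists_inv_mul_eq_mul_diagonal_mul (isHermitian_conjTranspose_mul_mul A hM.1)
  have hc := coeff_charpoly_neg_eq_prod_of_eq_mul_diagonal_mul hPQ hB
  have hE := coeff_adjugate_charmatrix_neg_mul_sq_of_eq_mul_diagonal_mul hPQ hB
  rw [card_filter_eq_zero_of_eq_mul_diagonal_mul hPQ hB, hrank] at hc hE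
  set c := (-(S * A)).charpoly.coeff (Fintype.card (Fin n) - r)
  set E := (matPolyEquiv (adjugate (charmatrix (-(S * A))))).coeff (Fintype.card (Fin n) - r)
  have hES : E * S = c • X :=
    calc E * S = E * (S * A * (S * A * W)) := by rw [← hXW, hSAX]
      _ = E * (S * A) ^ 2 * W := by rw [sq]; simp only [Matrix.mul_assoc]
      _ = c • X := by rw [hE, Matrix.smul_mul, ← hXW]
  have hden : ∑ β ∈ Finset.powersetCard r Finset.univ, (S * A).pminor β = c :=
    (coeff_charpoly_neg (S * A) hrn).symm
  have hnum : ∑ β ∈ (Finset.powersetCard r Finset.univ).filter (fun β => i ∈ β),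
      ((S * A).updateCol i (fun k => S k j)).pminor β = c * X i j := by
    rw [← smul_eq_mul, ← Matrix.smul_apply, ← hES]
    exact sum_det_updateCol_submatrix_eq_coeff_adjugate_mul_apply (S * A) S i j hrn
  have hc0 : c ≠ 0 := hc ▸ Finset.prod_ne_zero_iff.mpr fun k hk => (Finset.mem_filter.mp hk).2
  rw [hnum, hden, mul_div_cancel_left₀ _ hc0]
end

section
/- Let A ∈ ℂ^{n×n}, let k ≥ 1 be an integer, and let λ ∈ ℝ. Then for all i, j ∈ {1,…,n}, det((λI_n + A^{k+1})_{j.}(a^{(k)}_{i.})) = r₁^{(ij)} λ^{n−1} + r₂^{(ij)} λ^{n−2} + … + r_n^{(ij)}, where r_s^{(ij)} = Σ_{α ∈ I_{s,n}{j}} |((A^{k+1}_{j.}(a^{(k)}_{i.}))_α^α| for s = 1,…,n−1 and r_n^{(ij)} = det(A^{k+1}_{j.}(a^{(k)}_{i.})). -/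
open Matrix

/-!
The matrix is `diagonal d + C`, where `C = A^(k+1)` with row `j` replaced by row `i` of `A^k`,
`d l = λ` for `l ≠ j` and `d j = 0`. Expanding the determinant multilinearly in the rows,
`det (diagonal d + C) = ∑_β (∏_{l ∉ β} d l) · |C_β^β|`. The weight vanishes unless `j ∈ β`, and is
then `λ^(n - |β|)`; grouping the subsets `β` by cardinality gives the coefficients `r_s`.
-/

namespace Matrix

theorem updateRow_smul_one_add {ι R : Type*} [DecidableEq ι] [Semiring R] (c : R)
    (M : Matrix ι ι R) (j : ι) (v : ι → R) :
    (c • (1 : Matrix ι ι R) + M).updateRow j v =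
      diagonal (Function.update (fun _ => c) j 0) + M.updateRow j v := by
  ext l m
  by_cases hl : l = j
  · subst hl
    simp [diagonal_apply]
  · simp only [updateRow_ne hl, add_apply]
    by_cases hlm : l = m
    · subst hlm
      simp [hl]
    · simp [hlm]

variable {ι : Type*} [Fintype ι] [DecidableEq ι]

theorem det_of_piecewise_single_eq_pminor (C : Matrix ι ι ℂ) (s : Finset ι) :
    (of (s.piecewise (fun l => C l) fun l => Pi.single l 1)).det = C.pminor s := by
  let e : {l // l ∈ s} ⊕ {l // l ∉ s} ≃ ι := Equiv.sumCompl _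
  have hblocks : (of (s.piecewise (fun l => C l) fun l => Pi.single l 1)).submatrix e e =
      fromBlocks (C.submatrix (↑) (↑)) (C.submatrix (↑) (↑)) 0 1 := by
    ext (a | a) (b | b)
    · simp [e, a.2]
    · simp [e, a.2]
    · simpa [e, a.2, Pi.single_apply] using fun h : (b : ι) = a => a.2 (h ▸ b.2)
    · simp [e, a.2, Pi.single_apply, one_apply, Subtype.ext_iff, eq_comm]
  rw [← det_submatrix_equiv_self e, hblocks, det_fromBlocks_zero₂₁, det_one, mul_one, pminor]

theorem det_diagonal_add_eq_sum_pminor (d : ι → ℂ) (C : Matrix ι ι ℂ) :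
    (diagonal d + C).det = ∑ β : Finset ι, (∏ l ∈ βᶜ, d l) * C.pminor β := by
  have hrows : (diagonal d + C).det =
      detRowAlternating ((fun l => C l) + fun l => Pi.single l (d l)) := by
    rw [det]
    congr 1
    ext l m
    by_cases h : l = m <;> simp [h, eq_comm, add_comm]
  have hsplit (β : Finset ι) : β.piecewise (fun l => C l) (fun l => Pi.single l (d l)) =
      βᶜ.piecewise (fun l => d l • β.piecewise (fun l => C l) (fun l => Pi.single l 1) l)
        (β.piecewise (fun l => C l) fun l => Pi.single l 1) := by
    ext l m
    by_cases h : l ∈ β <;> simp [h, Pi.single_apply]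
  rw [hrows, AlternatingMap.map_add_univ]
  refine Finset.sum_congr rfl fun β _ => ?_
  rw [hsplit, ← det_of_piecewise_single_eq_pminor, ← smul_eq_mul]
  exact detRowAlternating.toMultilinearMap.map_piecewise_smul _ _ _

end Matrix

namespace Finset

variable {ι : Type*} [Fintype ι] [DecidableEq ι]

theorem prod_compl_update_const {M : Type*} [CommMonoidWithZero M] (c : M) (j : ι)
    (β : Finset ι) :
    ∏ l ∈ βᶜ, Function.update (fun _ => c) j 0 l =
      if j ∈ β then c ^ (Fintype.card ι - #β) else 0 := by
  split_ifs with hj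
  · rw [prod_update_of_notMem (by simpa using hj), prod_const, card_compl]
  · exact prod_eq_zero (mem_compl.2 hj) (by simp)

theorem sum_filter_mem_eq_sum_Icc_sum_powersetCard {M : Type*} [AddCommMonoid M]
    (f : Finset ι → M) (j : ι) :
    ∑ β with j ∈ β, f β =
      ∑ s ∈ Icc 1 (Fintype.card ι), ∑ α ∈ (powersetCard s univ).filter (j ∈ ·), f α := by
  have hcard : ∀ β ∈ (univ : Finset (Finset ι)).filter (j ∈ ·), #β ∈ Icc 1 (Fintype.card ι) :=
    fun β hβ => mem_Icc.2 ⟨card_pos.2 ⟨j, (mem_filter.1 hβ).2⟩, card_le_univ β⟩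
  rw [← sum_fiberwise_of_maps_to hcard]
  refine sum_congr rfl fun s _ => sum_congr ?_ fun _ _ => rfl
  ext β
  simp [and_comm]

end Finset

theorem det_smul_one_add_pow_succ_updateRow_general
    (n k : ℕ) (A : Matrix (Fin n) (Fin n) ℂ) (lam : ℝ) (i j : Fin n) :
    (((lam : ℂ) • (1 : Matrix (Fin n) (Fin n) ℂ) + A ^ (k + 1)).updateRow j
        (fun l => (A ^ k) i l)).det =
      ∑ s ∈ Finset.Icc 1 n,
        (∑ α ∈ (Finset.powersetCard s (Finset.univ : Finset (Fin n))).filter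
            (fun α => j ∈ α),
          ((A ^ (k + 1)).updateRow j (fun l => (A ^ k) i l)).pminor α) *
          (lam : ℂ) ^ (n - s) := by
  rw [updateRow_smul_one_add, det_diagonal_add_eq_sum_pminor]
  simp_rw [Finset.prod_compl_update_const, ite_mul, zero_mul, Fintype.card_fin]
  rw [← Finset.sum_filter, Finset.sum_filter_mem_eq_sum_Icc_sum_powersetCard, Fintype.card_fin]
  refine Finset.sum_congr rfl fun s _ => ?_
  rw [Finset.sum_mul]
  refine Finset.sum_congr rfl fun α hα => ?_
  rw [Finset.mem_powersetCard_univ.1 (Finset.mem_filter.1 hα).1, mul_comm]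

/-- For `A ∈ ℂ^{n×n}`, `k ≥ 1` and `λ ∈ ℝ`, for all `i, j`,
`det((λI_n + A^{k+1})_{j.}(a^{(k)}_{i.})) = r₁ λ^{n-1} + ⋯ + r_n`, where
`r_s = Σ_{α ∈ I_{s,n}{j}} |(A^{k+1}_{j.}(a^{(k)}_{i.}))_α^α|` (for `s = n` this sum is the
single principal minor over all indices, i.e. `det(A^{k+1}_{j.}(a^{(k)}_{i.}))`). -/
theorem det_smul_one_add_pow_succ_updateRow
    (n k : ℕ) (hk : 1 ≤ k) (A : Matrix (Fin n) (Fin n) ℂ) (lam : ℝ) (i j : Fin n) :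
    (((lam : ℂ) • (1 : Matrix (Fin n) (Fin n) ℂ) + A ^ (k + 1)).updateRow j
        (fun l => (A ^ k) i l)).det =
      ∑ s ∈ Finset.Icc 1 n,
        (∑ α ∈ (Finset.powersetCard s (Finset.univ : Finset (Fin n))).filter
            (fun α => j ∈ α),
          ((A ^ (k + 1)).updateRow j (fun l => (A ^ k) i l)).pminor α) *
          (lam : ℂ) ^ (n - s) :=
  det_smul_one_add_pow_succ_updateRow_general n k A lam i j
end

section
/- Let A ∈ ℂ^{n×n} with Ind A = k and rank A^{k+1} = rank A^k = r ≤ n. Then the matrix Q = A A^D satisfies, for all i, j ∈ {1,…,n}: q_{ij} = ( Σ_{α ∈ I_{r,n}{j}} |((A^{k+1}_{j.}(a^{(k+1)}_{i.}))_α^α| ) / ( Σ_{α ∈ I_{r,n}} |((A^{k+1}))_α^α| ), where a^{(k+1)}_{i.} denotes the i-th row of A^{k+1}. -/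
/-!
Write `B = A^(k+1)`, `Q = A A^D` and `E = 1 - Q + B`. Then `Q` is an idempotent of rank `r` with
`QB = BQ = B`, and `E` is invertible with inverse `1 - Q + (A^D)^(k+1)`.

Expanding `det (t + M)` in principal minors, the denominator is the coefficient of `t^(n-r)` in
`det (t + B)`, and the numerator is the same coefficient of the determinant of `t + B` with its
`j`-th row replaced by the `i`-th row of `B`, which by Cramer's rule is `(B adj (t + B))_ij`.
Now `t + B = (E + tQ)(Q + t(1 - Q))` with `det (Q + t(1 - Q)) = t^(n-r)` and `B (Q + t(1 - Q)) = B`,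
so `det (t + B) = t^(n-r) det (E + tQ)` and `B adj (t + B) = t^(n-r) B adj (E + tQ)`. The wanted
coefficients are therefore the constant terms `det E` and `B adj E = Q E adj E = det E • Q`.
-/

open Matrix

structure IsDrazinInverse {M : Type*} [Monoid M] (a x : M) (k : ℕ) : Prop where
  pow_succ_mul : a ^ (k + 1) * x = a ^ k
  mul_mul_self : x * a * x = x
  commute : Commute a x

namespace IsDrazinInverse

variable {R : Type*} [Ring R] {a x : R} {k : ℕ}

theorem isIdempotentElem_mul (h : IsDrazinInverse a x k) : IsIdempotentElem (a * x) := by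
  rw [IsIdempotentElem, mul_assoc, ← mul_assoc x, h.mul_mul_self]

theorem mul_mul_pow (h : IsDrazinInverse a x k) : a * x * a ^ k = a ^ k := by
  rw [mul_assoc, (h.commute.symm.pow_right k).eq, ← mul_assoc, ← pow_succ', h.pow_succ_mul]

theorem mul_mul_pow_succ (h : IsDrazinInverse a x k) : a * x * a ^ (k + 1) = a ^ (k + 1) := by
  rw [pow_succ, ← mul_assoc, h.mul_mul_pow]

theorem pow_succ_mul_mul (h : IsDrazinInverse a x k) : a ^ (k + 1) * (a * x) = a ^ (k + 1) := by
  rw [← mul_assoc, ← pow_succ, pow_succ', mul_assoc, h.pow_succ_mul, ← pow_succ']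

theorem pow_succ_mul_pow_succ (h : IsDrazinInverse a x k) :
    a ^ (k + 1) * x ^ (k + 1) = a * x := by
  rw [← h.commute.mul_pow, h.isIdempotentElem_mul.pow_succ_eq]

theorem mul_mul_pow_succ' (h : IsDrazinInverse a x k) : a * x * x ^ (k + 1) = x ^ (k + 1) := by
  rw [pow_succ', ← mul_assoc, h.commute.eq, h.mul_mul_self]

theorem one_sub_add_mul_one_sub_add (h : IsDrazinInverse a x k) :
    (1 - a * x + a ^ (k + 1)) * (1 - a * x + x ^ (k + 1)) = 1 := by
  have hQ := h.isIdempotentElem_mul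
  simp only [add_mul, mul_add, sub_mul, mul_sub, one_mul, mul_one, hQ.eq, h.pow_succ_mul_mul,
    h.pow_succ_mul_pow_succ, h.mul_mul_pow_succ']
  abel

theorem rank_mul_eq {n R : Type*} [Fintype n] [DecidableEq n] [CommRing R]
    [StrongRankCondition R] {A X : Matrix n n R} {k : ℕ} (h : IsDrazinInverse A X k)
    (hk : (A ^ (k + 1)).rank = (A ^ k).rank) : (A * X).rank = (A ^ (k + 1)).rank :=
  le_antisymm (h.pow_succ_mul_pow_succ ▸ rank_mul_le_left _ _)
    (hk ▸ h.mul_mul_pow ▸ rank_mul_le_left _ _)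

end IsDrazinInverse

namespace Matrix

open Polynomial

variable {n R : Type*} [DecidableEq n] [CommRing R]

theorem det_submatrix_updateRow_of_notMem (M : Matrix n n R) {j : n} (c : n → R)
    {s : Finset n} (hj : j ∉ s) :
    ((M.updateRow j c).submatrix (Subtype.val : s → n) Subtype.val).det =
      (M.submatrix (Subtype.val : s → n) Subtype.val).det := by
  congr 1
  ext a b
  simp [updateRow_ne (ne_of_mem_of_not_mem a.2 hj)]

theorem det_submatrix_updateRow_zero_of_mem (M : Matrix n n R) {j : n} {s : Finset n}
    (hj : j ∈ s) :
    ((M.updateRow j 0).submatrix (Subtype.val : s → n) Subtype.val).det = 0 :=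
  det_eq_zero_of_row_eq_zero ⟨j, hj⟩ fun _ => by simp

variable [Fintype n]

theorem coeff_det_X_smul_one_add_eq_sum_minors (M : Matrix n n R) {r : ℕ}
    (hr : r ≤ Fintype.card n) :
    ((X : R[X]) • (1 : Matrix n n R[X]) + M.map C).det.coeff (Fintype.card n - r) =
      ∑ s ∈ Finset.univ.powersetCard r,
        (M.submatrix (Subtype.val : s → n) (Subtype.val : s → n)).det := by
  have hcharmatrix : (X : R[X]) • (1 : Matrix n n R[X]) + M.map C = charmatrix (-M) := by
    ext i j
    by_cases hij : i = j <;> simp [hij]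
  rw [hcharmatrix, ← charpoly, charpoly_coeff_eq_sum_minors _ _ hr, Finset.mul_sum]
  refine Finset.sum_congr rfl fun s hs => ?_
  simp only [submatrix_neg, Pi.neg_apply, det_neg, Fintype.card_coe,
    (Finset.mem_powersetCard.mp hs).2, ← mul_assoc, ← pow_add, Even.neg_one_pow ⟨r, rfl⟩, one_mul]

theorem coeff_det_updateRow_X_smul_one_add_eq_sum_minors (M : Matrix n n R) (j : n)
    (c : n → R) {r : ℕ} (hr : r ≤ Fintype.card n) :
    (((X : R[X]) • (1 : Matrix n n R[X]) + M.map C).updateRow j (fun l => C (c l))).det.coeff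
        (Fintype.card n - r) =
      ∑ s ∈ (Finset.univ.powersetCard r).filter (fun s => j ∈ s),
        ((M.updateRow j c).submatrix (Subtype.val : s → n) (Subtype.val : s → n)).det := by
  set P := (X : R[X]) • (1 : Matrix n n R[X]) + M.map C
  have hrow : ∀ d : n → R, (X : R[X]) • (1 : Matrix n n R[X]) + (M.updateRow j d).map C =
      P.updateRow j ((fun l => C (d l)) + (X : R[X]) • Pi.single j 1) := by
    intro d
    ext a b
    rcases eq_or_ne a j with rfl | ha
    · by_cases hab : a = b <;> simp [hab, eq_comm, add_comm]
    · simp [P, ha]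
  have hsplit : (P.updateRow j fun l => C (c l)).det =
      ((X : R[X]) • (1 : Matrix n n R[X]) + (M.updateRow j c).map C).det -
        ((X : R[X]) • (1 : Matrix n n R[X]) + (M.updateRow j 0).map C).det := by
    rw [hrow, hrow, det_updateRow_add, det_updateRow_add]
    simp [det_eq_zero_of_row_eq_zero j]
  rw [hsplit, coeff_sub, coeff_det_X_smul_one_add_eq_sum_minors _ hr,
    coeff_det_X_smul_one_add_eq_sum_minors _ hr,
    ← Finset.sum_filter_add_sum_filter_not _ (fun s => j ∈ s),
    ← Finset.sum_filter_add_sum_filter_not _ (fun s => j ∈ s) (f := fun s : Finset n =>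
      ((M.updateRow j 0).submatrix (Subtype.val : s → n) Subtype.val).det)]
  rw [Finset.sum_eq_zero fun s hs =>
    det_submatrix_updateRow_zero_of_mem M (Finset.mem_filter.mp hs).2]
  rw [Finset.sum_congr rfl fun s hs => det_submatrix_updateRow_of_notMem M c
      (Finset.mem_filter.mp hs).2,
    Finset.sum_congr rfl fun s hs => det_submatrix_updateRow_of_notMem M 0
      (Finset.mem_filter.mp hs).2]
  ring

theorem det_updateRow_eq_vecMul_adjugate (A : Matrix n n R) (j : n) (v : n → R) :
    (A.updateRow j v).det = (v ᵥ* A.adjugate) j := by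
  rw [← cramer_transpose_apply, cramer_eq_adjugate_mulVec, ← adjugate_transpose,
    mulVec_transpose]

end Matrix

namespace Matrix

open Polynomial

variable {n K : Type*} [Fintype n] [DecidableEq n] [Field K]

theorem det_add_smul_one_sub_of_isIdempotentElem {Q : Matrix n n K}
    (hQ : IsIdempotentElem Q) (t : K) :
    (Q + t • (1 - Q)).det = t ^ (Fintype.card n - Q.rank) := by
  have hf : IsIdempotentElem (toLin' Q) := hQ.map toLinAlgEquiv'
  let e := Submodule.prodEquivOfIsCompl _ _ (LinearMap.IsIdempotentElem.isCompl hf)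
  have hconj : toLin' (Q + t • (1 - Q)) =
      e.toLinearMap ∘ₗ (LinearMap.id.prodMap (t • LinearMap.id)) ∘ₗ e.symm.toLinearMap := by
    rw [← LinearMap.comp_assoc, LinearEquiv.eq_comp_toLinearMap_symm]
    refine LinearMap.ext fun ⟨⟨x, hx⟩, ⟨y, hy⟩⟩ => ?_
    have hx' : Q *ᵥ x = x := (LinearMap.IsIdempotentElem.mem_range_iff hf).mp hx
    have hy' : Q *ᵥ y = 0 := hy
    simp [e, mulVec_add, hx', hy']
  rw [← LinearMap.det_toLin', hconj, LinearMap.det_conj,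
    LinearMap.det_prodMap, LinearMap.det_smul, LinearMap.det_id, LinearMap.det_id, one_mul,
    mul_one]
  congr 1
  have hrank := LinearMap.finrank_range_add_finrank_ker (toLin' Q)
  rw [Module.finrank_fintype_fun_eq_card] at hrank
  exact Nat.eq_sub_of_add_eq' hrank

theorem det_map_C_add_X_smul_one_sub_of_isIdempotentElem [Infinite K] {Q : Matrix n n K}
    (hQ : IsIdempotentElem Q) :
    (Q.map C + (X : K[X]) • (1 - Q).map C).det = X ^ (Fintype.card n - Q.rank) := by
  refine Polynomial.funext fun t => ?_
  rw [← coe_evalRingHom, RingHom.map_det, map_pow, coe_evalRingHom, eval_X,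
    ← det_add_smul_one_sub_of_isIdempotentElem hQ t]
  congr 1
  ext a b
  simp

variable {Q B : Matrix n n K}

theorem X_smul_one_add_map_C_eq_mul (hQ : IsIdempotentElem Q) (hBQ : B * Q = B) :
    (X : K[X]) • (1 : Matrix n n K[X]) + B.map C =
      ((1 - Q + B).map C + (X : K[X]) • Q.map C) * (Q.map C + (X : K[X]) • (1 - Q).map C) := by
  have h1 : (1 - Q + B) * Q = B := by
    rw [add_mul, sub_mul, one_mul, hQ.eq, sub_self, zero_add, hBQ]
  have h2 : (1 - Q + B) * (1 - Q) + Q * Q = 1 := by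
    rw [hQ.eq, add_mul, hQ.one_sub.eq, mul_sub, mul_one, hBQ, sub_self, add_zero, sub_add_cancel]
  have h3 : Q * (1 - Q) = 0 := by rw [mul_sub, mul_one, hQ.eq, sub_self]
  have hexpand : ∀ P R S T : Matrix n n K[X], (P + (X : K[X]) • R) * (S + (X : K[X]) • T) =
      P * S + (X : K[X]) • (P * T + R * S) + (X * X : K[X]) • (R * T) := by
    intro P R S T
    simp only [add_mul, mul_add, Matrix.smul_mul, Matrix.mul_smul, smul_smul, smul_add]
    abel
  rw [hexpand, ← Matrix.map_mul, ← Matrix.map_mul, ← Matrix.map_mul, ← Matrix.map_mul,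
    ← Matrix.map_add _ (map_add C), h1, h2, h3, Matrix.map_zero _ (map_zero C), smul_zero, add_zero,
    Matrix.map_one _ (map_zero C) (map_one C), add_comm]

theorem coeff_det_X_smul_one_add_map_C_eq_det [Infinite K] (hQ : IsIdempotentElem Q)
    (hBQ : B * Q = B) :
    ((X : K[X]) • (1 : Matrix n n K[X]) + B.map C).det.coeff (Fintype.card n - Q.rank) =
      (1 - Q + B).det := by
  rw [X_smul_one_add_map_C_eq_mul hQ hBQ, det_mul,
    det_map_C_add_X_smul_one_sub_of_isIdempotentElem hQ, mul_comm, coeff_X_pow_mul',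
    if_pos le_rfl, Nat.sub_self, coeff_zero_eq_eval_zero, eval_det_add_X_smul,
    ← RingHom.mapMatrix_apply, ← RingHom.map_det, eval_C]

theorem map_C_mul_adjugate_X_smul_one_add_map_C [Infinite K] (hQ : IsIdempotentElem Q)
    (hBQ : B * Q = B) :
    B.map C * adjugate ((X : K[X]) • (1 : Matrix n n K[X]) + B.map C) =
      (X : K[X]) ^ (Fintype.card n - Q.rank) •
        (B.map C * adjugate ((1 - Q + B).map C + (X : K[X]) • Q.map C)) := by
  set F := Q.map C + (X : K[X]) • (1 - Q).map C
  have hBF : B.map C * F = B.map C := by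
    rw [Matrix.mul_add, Matrix.mul_smul, ← Matrix.map_mul, ← Matrix.map_mul, mul_sub, mul_one, hBQ,
      sub_self, Matrix.map_zero _ (map_zero C), smul_zero, add_zero]
  set G := (1 - Q + B).map C + (X : K[X]) • Q.map C
  rw [X_smul_one_add_map_C_eq_mul hQ hBQ, adjugate_mul_distrib,
    ← det_map_C_add_X_smul_one_sub_of_isIdempotentElem hQ]
  calc B.map C * (adjugate F * adjugate G)
      = B.map C * F * adjugate F * adjugate G := by rw [hBF, Matrix.mul_assoc]
    _ = B.map C * (F * adjugate F) * adjugate G := by rw [Matrix.mul_assoc (B.map C) F]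
    _ = F.det • (B.map C * adjugate G) := by
      rw [mul_adjugate, Matrix.mul_smul, Matrix.mul_one, Matrix.smul_mul]

theorem coeff_map_C_mul_adjugate_X_smul_one_add_map_C_apply [Infinite K]
    (hQ : IsIdempotentElem Q) (hQB : Q * B = B) (hBQ : B * Q = B) (i j : n) :
    ((B.map C * adjugate ((X : K[X]) • (1 : Matrix n n K[X]) + B.map C)) i j).coeff
        (Fintype.card n - Q.rank) = (1 - Q + B).det * Q i j := by
  have hQE : Q * (1 - Q + B) = B := by
    rw [mul_add, mul_sub, mul_one, hQ.eq, sub_self, zero_add, hQB]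
  have heval : (B.map C * adjugate ((1 - Q + B).map C + (X : K[X]) • Q.map C)).map
      (evalRingHom 0) = (1 - Q + B).det • Q := by
    have hadj := RingHom.map_adjugate (evalRingHom 0) ((1 - Q + B).map C + (X : K[X]) • Q.map C)
    simp only [RingHom.mapMatrix_apply] at hadj
    have hG : ((1 - Q + B).map C + (X : K[X]) • Q.map C).map (evalRingHom 0) = 1 - Q + B := by
      ext a b
      simp
    have hB : (B.map C).map (evalRingHom 0) = B := by
      ext a b
      simp
    rw [Matrix.map_mul, hadj, hG, hB]
    nth_rw 1 [← hQE]
    rw [Matrix.mul_assoc, mul_adjugate, Matrix.mul_smul, Matrix.mul_one]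
  have hij := congr_fun₂ heval i j
  rw [map_apply, smul_apply, smul_eq_mul, coe_evalRingHom] at hij
  rw [map_C_mul_adjugate_X_smul_one_add_map_C hQ hBQ, smul_apply, smul_eq_mul, coeff_X_pow_mul',
    if_pos le_rfl, Nat.sub_self, coeff_zero_eq_eval_zero, hij]

end Matrix

theorem mul_drazinInverse_entry_det_repr_general
    (n k r : ℕ) (A : Matrix (Fin n) (Fin n) ℂ)
    (hr1 : (A ^ (k + 1)).rank = r) (hr2 : (A ^ k).rank = r)
    (X : Matrix (Fin n) (Fin n) ℂ)
    (h1 : A ^ (k + 1) * X = A ^ k) (h2 : X * A * X = X) (h3 : A * X = X * A)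
    (i j : Fin n) :
    (A * X) i j =
      (∑ α ∈ (Finset.powersetCard r (Finset.univ : Finset (Fin n))).filter
          (fun α => j ∈ α),
        ((A ^ (k + 1)).updateRow j (fun l => (A ^ (k + 1)) i l)).pminor α) /
      (∑ α ∈ Finset.powersetCard r (Finset.univ : Finset (Fin n)),
        (A ^ (k + 1)).pminor α) := by
  have hD : IsDrazinInverse A X k := ⟨h1, h2, h3⟩
  have hQ := hD.isIdempotentElem_mul
  have hrank : (A * X).rank = r := (hD.rank_mul_eq (hr1.trans hr2.symm)).trans hr1
  have hrn : r ≤ Fintype.card (Fin n) := hr1 ▸ rank_le_card_height _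
  have hdet : (1 - A * X + A ^ (k + 1)).det ≠ 0 := left_ne_zero_of_mul_eq_one <| by
    rw [← det_mul, hD.one_sub_add_mul_one_sub_add, det_one]
  have hnum : ∑ α ∈ (Finset.powersetCard r Finset.univ).filter (fun α => j ∈ α),
      ((A ^ (k + 1)).updateRow j (fun l => (A ^ (k + 1)) i l)).pminor α =
        (1 - A * X + A ^ (k + 1)).det * (A * X) i j := by
    rw [← coeff_map_C_mul_adjugate_X_smul_one_add_map_C_apply hQ hD.mul_mul_pow_succ
      hD.pow_succ_mul_mul, hrank, mul_apply_eq_vecMul, ← det_updateRow_eq_vecMul_adjugate]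
    exact (coeff_det_updateRow_X_smul_one_add_eq_sum_minors _ j _ hrn).symm
  have hden : ∑ α ∈ Finset.powersetCard r Finset.univ, (A ^ (k + 1)).pminor α =
      (1 - A * X + A ^ (k + 1)).det := by
    rw [← coeff_det_X_smul_one_add_map_C_eq_det hQ hD.pow_succ_mul_mul, hrank]
    exact (coeff_det_X_smul_one_add_eq_sum_minors _ hrn).symm
  rw [hnum, hden, mul_div_cancel_left₀ _ hdet]

/-- Determinantal representation of `Q = A A^D`, where `X = A^D` is the
Drazin inverse of `A ∈ ℂ^{n×n}` (characterized by `A^{k+1} X = A^k`, `XAX = X`,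
`AX = XA`), `k = Ind A` and `rank A^{k+1} = rank A^k = r ≤ n`. -/
theorem mul_drazinInverse_entry_det_repr
    (n k r : ℕ) (A : Matrix (Fin n) (Fin n) ℂ)
    (hk : IsLeast {j : ℕ | (A ^ (j + 1)).rank = (A ^ j).rank} k)
    (hr1 : (A ^ (k + 1)).rank = r) (hr2 : (A ^ k).rank = r) (hrn : r ≤ n)
    (X : Matrix (Fin n) (Fin n) ℂ)
    (h1 : A ^ (k + 1) * X = A ^ k) (h2 : X * A * X = X) (h3 : A * X = X * A)
    (i j : Fin n) :
    (A * X) i j =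
      (∑ α ∈ (Finset.powersetCard r (Finset.univ : Finset (Fin n))).filter
          (fun α => j ∈ α),
        ((A ^ (k + 1)).updateRow j (fun l => (A ^ (k + 1)) i l)).pminor α) /
      (∑ α ∈ Finset.powersetCard r (Finset.univ : Finset (Fin n)),
        (A ^ (k + 1)).pminor α) :=
  mul_drazinInverse_entry_det_repr_general n k r A hr1 hr2 X h1 h2 h3 i j
end

section
/- Let A ∈ ℂ^{n×n} with Ind A = k and rank A^{k+1} = rank A^k = r, and let y ∈ ℂ^n. Then the Drazin inverse solution x̂ = A^D y of the system Ax = y satisfies, for every i ∈ {1,…,n}: x̂_i = ( Σ_{β ∈ J_{r,n}{i}} |((A^{k+1}_{.i}(f))_β^β| ) / ( Σ_{β ∈ J_{r,n}} |((A^{k+1}))_β^β| ), where f = A^k y. -/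
open Matrix

/-!
Write `M = A^(k+1)`, `G = (A^D)^(k+1)` (the group inverse of `M`) and `x̂ = A^D y`, so that
`f = A^k y = M x̂` and `x̂ = M z` with `z = M w`. Over `ℂ[X]`, Cramer's rule for `B = X • 1 + M`
applied to `f = B x̂ - X x̂` and `x̂ = B z - X z` gives
`det B_{.i}(f) = x̂_i det B - X (z_i det B - X det B_{.i}(z))`.
Since `M` and `M_{.i}(z)` have rank at most `r`, `X^(n-r)` divides `det B` and `det B_{.i}(z)`,
so comparing coefficients of `X^(n-r)` gives `[X^(n-r)] det B_{.i}(f) = x̂_i [X^(n-r)] det B`, and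
these two coefficients are the sums of principal `r × r` minors in the formula.

The denominator is nonzero: with the idempotent `W = M G`,
`X • 1 + M = (X • W + (M + 1 - W)) (X • (1 - W) + W)`, the first factor is invertible at `X = 0`,
and the second has determinant `c X^(n-r)` with `c ≠ 0`, since its product with
`X • W + (1 - W)` is `X • 1`.
-/

open Polynomial

namespace IsIdempotentElem
variable {S A : Type*} [CommRing S] [Ring A] [Algebra S A] {e : A}

theorem smul_one_sub_add_mul_smul_add_one_sub (he : IsIdempotentElem e) (t : S) :
    (t • (1 - e) + e) * (t • e + (1 - e)) = t • 1 := by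
  simp only [add_mul, mul_add, smul_mul_assoc, mul_smul_comm, he.one_sub_mul_self,
    he.mul_one_sub_self, he.one_sub.eq, he.eq, smul_zero, zero_add, add_zero, ← smul_add,
    add_sub_cancel]

theorem smul_add_mul_smul_one_sub_add {m : A} (he : IsIdempotentElem e) (hme : m * e = m)
    (t : S) :
    (t • e + (m + 1 - e)) * (t • (1 - e) + e) = t • 1 + m := by
  have h1 : (m + 1 - e) * (1 - e) = 1 - e := by
    rw [add_sub_assoc, add_mul, he.one_sub.eq, mul_sub, mul_one, hme, sub_self, zero_add]
  have h2 : (m + 1 - e) * e = m := by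
    rw [add_sub_assoc, add_mul, he.one_sub_mul_self, hme, add_zero]
  simp only [add_mul, mul_add, smul_mul_assoc, mul_smul_comm, he.mul_one_sub_self, he.eq, h1, h2,
    smul_zero, zero_add]
  rw [← add_assoc, ← smul_add, sub_add_cancel]

end IsIdempotentElem

namespace Commute
variable {R : Type*} [Monoid R] {a x : R}

theorem mul_mul_self_eq_right (hax : Commute a x) (hxax : x * a * x = x) : a * x * x = x := by
  rw [hax.eq, hxax]

theorem pow_succ_mul_pow_succ_eq_mul (hax : Commute a x) (hxax : x * a * x = x) (m : ℕ) :
    a ^ (m + 1) * x ^ (m + 1) = a * x := by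
  have hidem : IsIdempotentElem (a * x) := by
    rw [IsIdempotentElem, mul_assoc, ← mul_assoc x, hxax]
  rw [← hax.mul_pow, hidem.pow_succ_eq]

theorem pow_succ_mul_pow_succ_mul_pow_succ_left (hax : Commute a x) (hxax : x * a * x = x)
    {k : ℕ} (hk : a ^ (k + 1) * x = a ^ k) :
    a ^ (k + 1) * x ^ (k + 1) * a ^ (k + 1) = a ^ (k + 1) := by
  rw [hax.pow_succ_mul_pow_succ_eq_mul hxax, mul_assoc, ← (hax.pow_left _).eq, hk, ← pow_succ']

theorem pow_succ_mul_pow_succ_mul_pow_succ_right (hax : Commute a x) (hxax : x * a * x = x)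
    (k : ℕ) : x ^ (k + 1) * a ^ (k + 1) * x ^ (k + 1) = x ^ (k + 1) := by
  rw [← (hax.pow_pow _ _).eq, hax.pow_succ_mul_pow_succ_eq_mul hxax, pow_succ', ← mul_assoc,
    hax.mul_mul_self_eq_right hxax]

end Commute

theorem Polynomial.coeff_X_mul_of_X_pow_dvd {R : Type*} [Semiring R] {p : R[X]} {m : ℕ}
    (h : X ^ m ∣ p) : (X * p).coeff m = 0 := by
  cases m with
  | zero => exact coeff_X_mul_zero p
  | succ m => rw [coeff_X_mul, X_pow_dvd_iff.mp h m m.lt_succ_self]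

namespace Matrix
variable {n : Type*} [Fintype n] [DecidableEq n]

theorem det_eq_zero_of_rows_mem {K : Type*} [Field K] (M : Matrix n n K) (S : Finset n)
    (V : Submodule K (n → K)) (hS : ∀ j ∈ S, M j ∈ V) (hV : Module.finrank K V < S.card) :
    M.det = 0 := by
  by_contra hM
  have hli : LinearIndependent K fun j : S => M j :=
    (linearIndependent_rows_of_det_ne_zero hM).comp _ Subtype.val_injective
  have hspan : Submodule.span K (Set.range fun j : S => M j) ≤ V :=
    Submodule.span_le.mpr (Set.range_subset_iff.mpr fun j => hS j j.2)
  have := Submodule.finrank_mono hspan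
  rw [finrank_span_eq_card hli, Fintype.card_coe] at this
  omega

theorem rank_updateCol_mulVec_le {K : Type*} [Field K] (A : Matrix n n K) (w : n → K) (i : n) :
    (A.updateCol i (A *ᵥ w)).rank ≤ A.rank := by
  simpa [mul_updateCol] using rank_mul_le_left A ((1 : Matrix n n K).updateCol i w)

theorem cramer_eq_det_smul_sub_smul_cramer {R : Type*} [CommRing R] (B : Matrix n n R) (t : R)
    (v b : n → R) (h : B *ᵥ v = t • v + b) : cramer B b = B.det • v - t • cramer B v := by
  have hb : b = B *ᵥ v - t • v := by rw [h, add_sub_cancel_left]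
  have hself : cramer B (B *ᵥ v) = B.det • v := by
    rw [cramer_eq_adjugate_mulVec, mulVec_mulVec, adjugate_mul, smul_mulVec, one_mulVec]
  rw [hb, map_sub, map_smul, hself]

theorem det_X_smul_add_eq_sum {R : Type*} [CommRing R] (A B : Matrix n n R) :
    det ((X : R[X]) • B.map C + A.map C) =
      ∑ S : Finset n, C (det (of (S.piecewise B.row A.row))) * X ^ S.card := by
  let D := (detRowAlternating : (n → R[X]) [⋀^n]→ₗ[R[X]] R[X])
  change D ((fun j => ((X : R[X]) • B.map C) j) + fun j => A.map C j) = _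
  rw [D.map_add_univ]
  refine Finset.sum_congr rfl fun S _ => ?_
  have hrows : S.piecewise (fun j => ((X : R[X]) • B.map C) j) (fun j => A.map C j) =
      fun j => (if j ∈ S then (X : R[X]) else 1) •
        S.piecewise (fun j => B.map C j) (fun j => A.map C j) j := by
    funext j l
    by_cases hj : j ∈ S <;> simp only [Finset.piecewise, hj, if_true, if_false,
      Pi.smul_apply, one_smul, Matrix.smul_apply]
  have hmap : S.piecewise (fun j => B.map C j) (fun j => A.map C j) =
      (of (S.piecewise B.row A.row)).map C := by
    funext j l
    by_cases hj : j ∈ S <;> simp [Finset.piecewise, hj]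
  rw [hrows, D.map_smul_univ, Finset.prod_ite_mem, Finset.univ_inter, Finset.prod_const,
    smul_eq_mul, hmap, mul_comm]
  exact congrArg (· * _) (RingHom.map_det C _).symm

theorem X_pow_dvd_det_X_smul_add {K : Type*} [Field K] (A B : Matrix n n K) :
    (X : K[X]) ^ (Fintype.card n - A.rank) ∣ det ((X : K[X]) • B.map C + A.map C) := by
  rw [det_X_smul_add_eq_sum]
  refine Finset.dvd_sum fun S _ => ?_
  by_cases hS : Fintype.card n - A.rank ≤ S.card
  · exact Dvd.dvd.mul_left (pow_dvd_pow X hS) _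
  · suffices det (of (S.piecewise B.row A.row)) = 0 by simp [this]
    refine det_eq_zero_of_rows_mem _ Sᶜ (Submodule.span K (Set.range A.row)) (fun j hj => ?_) ?_
    · change S.piecewise B.row A.row j ∈ _
      rw [Finset.piecewise_eq_of_notMem _ _ _ (Finset.mem_compl.mp hj)]
      exact Submodule.subset_span (Set.mem_range_self j)
    · rw [← rank_eq_finrank_span_row, Finset.card_compl]
      omega

theorem exists_det_X_smul_one_sub_add_eq {K : Type*} [Field K] {W : Matrix n n K}
    (hW : IsIdempotentElem W) :
    ∃ c ≠ 0,
      det ((X : K[X]) • (1 - W).map C + W.map C) = C c * X ^ (Fintype.card n - W.rank) := by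
  have hprod : det ((X : K[X]) • (1 - W).map C + W.map C) *
      det ((X : K[X]) • W.map C + (1 - W).map C) = X ^ Fintype.card n := by
    have hmap : (1 - W).map C = 1 - W.map C := by
      rw [Matrix.map_sub _ (map_sub C), Matrix.map_one _ (map_zero C) (map_one C)]
    have hW' : IsIdempotentElem (W.map C) := hW.map (RingHom.mapMatrix C)
    rw [← det_mul, hmap, hW'.smul_one_sub_add_mul_smul_add_one_sub, det_smul, det_one,
      mul_one]
  have hranks := rank_add_rank_le_card_of_mul_eq_zero hW.one_sub_mul_self
  obtain ⟨h, hh⟩ := X_pow_dvd_det_X_smul_add W (1 - W)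
  obtain ⟨h', hh'⟩ := (pow_dvd_pow X (by omega : W.rank ≤ Fintype.card n - (1 - W).rank)).trans
    (X_pow_dvd_det_X_smul_add (1 - W) W)
  have hunit : h * h' = 1 := by
    rw [hh, hh', mul_mul_mul_comm, ← pow_add, Nat.sub_add_cancel (rank_le_card_width W)] at hprod
    exact mul_left_cancel₀ (pow_ne_zero _ X_ne_zero) (hprod.trans (mul_one _).symm)
  obtain ⟨c, hc, rfl⟩ := Polynomial.isUnit_iff.mp (IsUnit.of_mul_eq_one _ hunit)
  exact ⟨c, hc.ne_zero, by rw [hh, mul_comm]⟩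

theorem det_piecewise_compl_diagonal {R : Type*} [CommRing R] (A : Matrix n n R)
    (U β : Finset n) :
    det (of (βᶜ.piecewise (diagonal fun j => if j ∈ U then 0 else 1 : Matrix n n R).row A.row)) =
      if U ⊆ β then (A.submatrix (↑) (↑) : Matrix β β R).det else 0 := by
  split_ifs with hU
  · rw [← det_piecewise_one_eq_submatrix_det]
    congr 2
    funext j l
    by_cases hj : j ∈ β
    · simp [Finset.piecewise, hj]
    · have hjU : j ∉ U := fun h => hj (hU h)
      simp [Finset.piecewise, hj, hjU, one_apply, diagonal_apply]
  · obtain ⟨j, hjU, hjβ⟩ := Finset.not_subset.mp hU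
    refine det_eq_zero_of_row_eq_zero j fun l => ?_
    simp [Finset.piecewise, hjβ, hjU, diagonal_apply]

theorem coeff_det_X_smul_diagonal_add {R : Type*} [CommRing R] (A : Matrix n n R)
    (U : Finset n) {r : ℕ} (hr : r ≤ Fintype.card n) :
    (det ((X : R[X]) • (diagonal fun j => if j ∈ U then 0 else 1 : Matrix n n R).map C +
        A.map C)).coeff (Fintype.card n - r) =
      ∑ β ∈ (Finset.powersetCard r Finset.univ).filter (U ⊆ ·),
        (A.submatrix (↑) (↑) : Matrix β β R).det := by
  rw [det_X_smul_add_eq_sum, finsetSum_coeff,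
    ← Equiv.sum_comp (Function.Involutive.toPerm _ (compl_involutive (α := Finset n))),
    Finset.sum_filter, Finset.powersetCard_eq_filter, Finset.sum_filter, Finset.powerset_univ]
  refine Finset.sum_congr rfl fun β _ => ?_
  have hcard : Fintype.card n - r = βᶜ.card ↔ β.card = r := by
    have := β.card_le_univ
    rw [Finset.card_compl]
    omega
  simp only [Function.Involutive.coe_toPerm, coeff_C_mul_X_pow, hcard]
  exact congrArg (ite _ · 0) (det_piecewise_compl_diagonal A U β)

theorem cramer_X_smul_one_add_apply {R : Type*} [CommRing R] (A : Matrix n n R) (v : n → R)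
    (i : n) :
    cramer ((X : R[X]) • 1 + A.map C) (C ∘ v) i =
      det ((X : R[X]) •
          (diagonal fun j => if j ∈ ({i} : Finset n) then 0 else 1 : Matrix n n R).map C +
        (A.updateCol i v).map C) := by
  rw [cramer_apply]
  congr 1
  refine Matrix.ext fun j l => ?_
  by_cases hl : l = i
  · simp +contextual [hl, diagonal_apply]
  · simp +contextual [hl, one_apply, diagonal_apply]

theorem coeff_det_X_smul_one_add (A : Matrix n n ℂ) {r : ℕ} (hr : r ≤ Fintype.card n) :
    (det ((X : ℂ[X]) • 1 + A.map C)).coeff (Fintype.card n - r) =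
      ∑ β ∈ Finset.powersetCard r Finset.univ, A.pminor β := by
  have hone :
      (diagonal fun j => if j ∈ (∅ : Finset n) then 0 else 1 : Matrix n n ℂ).map C = 1 := by
    simp
  rw [← hone, coeff_det_X_smul_diagonal_add A ∅ hr,
    Finset.filter_true_of_mem fun β _ => Finset.empty_subset β]
  rfl

theorem coeff_cramer_X_smul_one_add_apply (A : Matrix n n ℂ) (v : n → ℂ) (i : n) {r : ℕ}
    (hr : r ≤ Fintype.card n) :
    (cramer ((X : ℂ[X]) • 1 + A.map C) (C ∘ v) i).coeff (Fintype.card n - r) =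
      ∑ β ∈ (Finset.powersetCard r Finset.univ).filter (fun β => i ∈ β),
        (A.updateCol i v).pminor β := by
  rw [cramer_X_smul_one_add_apply, coeff_det_X_smul_diagonal_add _ _ hr]
  simp only [Finset.singleton_subset_iff]
  rfl

theorem sum_pminor_updateCol_eq_mul (M : Matrix n n ℂ) {x w : n → ℂ}
    (hx : M *ᵥ (M *ᵥ w) = x) (i : n) :
    ∑ β ∈ (Finset.powersetCard M.rank Finset.univ).filter (fun β => i ∈ β),
        (M.updateCol i (M *ᵥ x)).pminor β =
      x i * ∑ β ∈ Finset.powersetCard M.rank Finset.univ, M.pminor β := by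
  set B : Matrix n n ℂ[X] := (X : ℂ[X]) • 1 + M.map C
  set m := Fintype.card n - M.rank
  have hr : M.rank ≤ Fintype.card n := rank_le_card_width M
  have hB : ∀ u, B *ᵥ (C ∘ u) = (X : ℂ[X]) • (C ∘ u) + C ∘ (M *ᵥ u) := fun u => by
    ext j
    simp [B, add_mulVec, smul_mulVec, RingHom.map_mulVec]
  have hP : (X : ℂ[X]) ^ m ∣ B.det := by
    simpa using X_pow_dvd_det_X_smul_add M 1
  have hQ : (X : ℂ[X]) ^ m ∣ cramer B (C ∘ (M *ᵥ w)) i := by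
    rw [cramer_X_smul_one_add_apply]
    have := rank_updateCol_mulVec_le M w i
    exact (pow_dvd_pow X (by omega)).trans (X_pow_dvd_det_X_smul_add _ _)
  have hcramer : cramer B (C ∘ (M *ᵥ x)) i =
      C (x i) * B.det - X * (C ((M *ᵥ w) i) * B.det - X * cramer B (C ∘ (M *ᵥ w)) i) := by
    have hBz := hB (M *ᵥ w)
    rw [hx] at hBz
    rw [cramer_eq_det_smul_sub_smul_cramer B X _ _ (hB x),
      cramer_eq_det_smul_sub_smul_cramer B X _ _ hBz]
    simp [mul_comm]
  rw [← coeff_cramer_X_smul_one_add_apply _ _ _ hr, ← coeff_det_X_smul_one_add _ hr, hcramer,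
    coeff_sub, coeff_X_mul_of_X_pow_dvd ((dvd_mul_of_dvd_right hP _).sub
      (dvd_mul_of_dvd_right hQ _)), coeff_C_mul, sub_zero]

theorem sum_pminor_ne_zero_of_group_inverse {M G : Matrix n n ℂ} (hMGM : M * G * M = M)
    (hGMG : G * M * G = G) (hMG : Commute M G) :
    ∑ β ∈ Finset.powersetCard M.rank Finset.univ, M.pminor β ≠ 0 := by
  have hW : IsIdempotentElem (M * G) := by rw [IsIdempotentElem, ← mul_assoc, hMGM]
  have hMW : M * (M * G) = M := by rw [hMG.eq, ← mul_assoc, hMGM]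
  have hWG : M * G * G = G := by rw [hMG.eq, hGMG]
  have hrank : (M * G).rank = M.rank :=
    le_antisymm (rank_mul_le_left M G) (by simpa [hMGM] using rank_mul_le_left (M * G) M)
  set W := M * G
  have hdet : (M + 1 - W).det ≠ 0 := by
    have hinv : (M + 1 - W) * (G + 1 - W) = 1 := by
      simp only [add_sub_assoc, add_mul, mul_add, mul_sub, mul_one, hMW, hW.one_sub_mul_self,
        sub_mul, one_mul, hWG]
      abel
    exact left_ne_zero_of_mul_eq_one (by rw [← det_mul, hinv, det_one])
  obtain ⟨c, hc, hH⟩ := exists_det_X_smul_one_sub_add_eq hW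
  have hfactor : det ((X : ℂ[X]) • 1 + M.map C) =
      det ((X : ℂ[X]) • W.map C + (M + 1 - W).map C) * (C c * X ^ (Fintype.card n - M.rank)) := by
    have hW' : IsIdempotentElem (C.mapMatrix W) := hW.map _
    have hMW' : C.mapMatrix M * C.mapMatrix W = C.mapMatrix M := by rw [← map_mul, hMW]
    rw [← hrank, ← hH, ← det_mul]
    change _ = det (((X : ℂ[X]) • C.mapMatrix W + C.mapMatrix (M + 1 - W)) *
      ((X : ℂ[X]) • C.mapMatrix (1 - W) + C.mapMatrix W))
    rw [map_sub, map_add, map_sub, map_one, hW'.smul_add_mul_smul_one_sub_add hMW']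
    rfl
  rw [← coeff_det_X_smul_one_add M (rank_le_card_width M), hfactor, ← mul_assoc,
    coeff_mul_X_pow', if_pos le_rfl, Nat.sub_self, coeff_mul_C, coeff_det_X_add_C_zero]
  exact mul_ne_zero hdet hc

end Matrix

theorem cramer_drazin_inverse_solution_general
    (n k r : ℕ) (A : Matrix (Fin n) (Fin n) ℂ)
    (hr1 : (A ^ (k + 1)).rank = r)
    (y : Fin n → ℂ)
    (X : Matrix (Fin n) (Fin n) ℂ)
    (h1 : A ^ (k + 1) * X = A ^ k) (h2 : X * A * X = X) (h3 : A * X = X * A)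
    (i : Fin n) :
    X.mulVec y i =
      (∑ β ∈ (Finset.powersetCard r (Finset.univ : Finset (Fin n))).filter
          (fun β => i ∈ β),
        ((A ^ (k + 1)).updateCol i ((A ^ k).mulVec y)).pminor β) /
      (∑ β ∈ Finset.powersetCard r (Finset.univ : Finset (Fin n)),
        (A ^ (k + 1)).pminor β) := by
  have hAX : Commute A X := h3
  have hMG : Commute (A ^ (k + 1)) (X ^ (k + 1)) := hAX.pow_pow _ _
  have hden := sum_pminor_ne_zero_of_group_inverse
    (hAX.pow_succ_mul_pow_succ_mul_pow_succ_left h2 h1)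
    (hAX.pow_succ_mul_pow_succ_mul_pow_succ_right h2 k) hMG
  have hx : A ^ (k + 1) *ᵥ (A ^ (k + 1) *ᵥ ((X ^ (k + 1) * (X ^ (k + 1) * X)) *ᵥ y)) =
      X *ᵥ y := by
    rw [mulVec_mulVec, mulVec_mulVec, mul_assoc, hMG.left_comm, ← mul_assoc (A ^ (k + 1)),
      ← mul_assoc (A ^ (k + 1)), hAX.pow_succ_mul_pow_succ_eq_mul h2,
      hAX.mul_mul_self_eq_right h2, hAX.mul_mul_self_eq_right h2]
  have hf : A ^ k *ᵥ y = A ^ (k + 1) *ᵥ (X *ᵥ y) := by rw [mulVec_mulVec, h1]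
  rw [← hr1, hf, sum_pminor_updateCol_eq_mul _ hx, mul_div_cancel_right₀ _ hden]

/-- Cramer's rule for the Drazin inverse solution `x̂ = A^D y` of the
system `A x = y`, where `X = A^D` is the Drazin inverse of `A ∈ ℂ^{n×n}` (characterized by
`A^{k+1} X = A^k`, `XAX = X`, `AX = XA`), `k = Ind A`,
`rank A^{k+1} = rank A^k = r`, and `f = A^k y`:
`x̂_i = (Σ_{β ∈ J_{r,n}{i}} |(A^{k+1}_{.i}(f))_β^β|) / (Σ_{β ∈ J_{r,n}} |(A^{k+1})_β^β|)`. -/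
theorem cramer_drazin_inverse_solution
    (n k r : ℕ) (A : Matrix (Fin n) (Fin n) ℂ)
    (hk : IsLeast {j : ℕ | (A ^ (j + 1)).rank = (A ^ j).rank} k)
    (hr1 : (A ^ (k + 1)).rank = r) (hr2 : (A ^ k).rank = r)
    (y : Fin n → ℂ)
    (X : Matrix (Fin n) (Fin n) ℂ)
    (h1 : A ^ (k + 1) * X = A ^ k) (h2 : X * A * X = X) (h3 : A * X = X * A)
    (i : Fin n) :
    X.mulVec y i =
      (∑ β ∈ (Finset.powersetCard r (Finset.univ : Finset (Fin n))).filter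
          (fun β => i ∈ β),
        ((A ^ (k + 1)).updateCol i ((A ^ k).mulVec y)).pminor β) /
      (∑ β ∈ Finset.powersetCard r (Finset.univ : Finset (Fin n)),
        (A ^ (k + 1)).pminor β) :=
  cramer_drazin_inverse_solution_general n k r A hr1 y X h1 h2 h3 i
end
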